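/- arXiv:1709.02113 — 4 statements merged into one kernel-verified Lean document; each statement's English description precedes it below -/
import Mathlib

section
/- For a > 1 and any nonnegative integer k, the tail sum of the series of j^{-a} satisfies 1/((a-1)(k+1)^{a-1}) ≤ Σ_{j=k+1}^∞ j^{-a} ≤ 1/((a-1)(k+1/2)^{a-1}). -/
/-!
Put `F c n = (c + n) ^ (1 - a) / (a - 1)`. Since `-x ^ (1 - a) / (a - 1)` is an antiderivative
of the decreasing convex function `x ^ (-a)`, each term `(k + 1 + n) ^ (-a)` is squeezed between
the telescoping differences `F (k + 1) n - F (k + 1) (n + 1)` and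
`F (k + 1/2) n - F (k + 1/2) (n + 1)`, whose sums are `F (k + 1) 0` and `F (k + 1/2) 0`.
The lower comparison is Bernoulli's inequality `(1 + t) ^ (1 - a) ≥ 1 + (1 - a) t`; the upper one
is the midpoint estimate `(1 - s) ^ (1 - a) - (1 + s) ^ (1 - a) ≥ 2 (a - 1) s`, whose derivative
in `s` is nonnegative by Bernoulli's inequality at `1 ± s`.
-/

open Filter Topology Set

theorem one_add_mul_self_le_rpow_one_add_of_nonpos {s p : ℝ} (hs : -1 < s) (hp : p ≤ 0) :
    1 + p * s ≤ (1 + s) ^ p := by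
  have hpos : 0 < 1 + s := by linarith
  have hlog : Real.log (1 + s) ≤ s := by linarith [Real.log_le_sub_one_of_pos hpos]
  calc 1 + p * s ≤ 1 + p * Real.log (1 + s) := by nlinarith
    _ ≤ Real.exp (Real.log (1 + s) * p) := by
        linarith [Real.add_one_le_exp (Real.log (1 + s) * p)]
    _ = (1 + s) ^ p := (Real.rpow_def_of_pos hpos p).symm

theorem two_le_rpow_one_sub_add_rpow_one_add {s p : ℝ} (hs₀ : -1 < s) (hs₁ : s < 1)
    (hp : p ≤ 0) : 2 ≤ (1 - s) ^ p + (1 + s) ^ p := by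
  have h₁ := one_add_mul_self_le_rpow_one_add_of_nonpos (s := -s) (by linarith) hp
  have h₂ := one_add_mul_self_le_rpow_one_add_of_nonpos hs₀ hp
  rw [← sub_eq_add_neg] at h₁
  linarith

theorem mul_le_rpow_one_sub_sub_rpow_one_add {a s : ℝ} (ha : 1 ≤ a) (hs₀ : 0 ≤ s)
    (hs₁ : s < 1) : 2 * (a - 1) * s ≤ (1 - s) ^ (1 - a) - (1 + s) ^ (1 - a) := by
  set φ : ℝ → ℝ := fun t => (1 - t) ^ (1 - a) - (1 + t) ^ (1 - a) - 2 * (a - 1) * t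
  set φ' : ℝ → ℝ := fun t => (a - 1) * ((1 - t) ^ (-a) + (1 + t) ^ (-a) - 2)
  have hderiv : ∀ t ∈ Ioo (-1 : ℝ) 1, HasDerivAt φ (φ' t) t := by
    rintro t ⟨ht₀, ht₁⟩
    have hsub := ((hasDerivAt_id' t).const_sub 1).rpow_const (p := 1 - a)
      (Or.inl (sub_pos.2 ht₁).ne')
    have hadd := ((hasDerivAt_id' t).const_add 1).rpow_const (p := 1 - a)
      (Or.inl (by linarith : 0 < 1 + t).ne')
    refine ((hsub.sub hadd).sub ((hasDerivAt_id' t).const_mul (2 * (a - 1)))).congr_deriv ?_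
    rw [show 1 - a - 1 = -a by ring]
    ring
  have hmono : MonotoneOn φ (Ico 0 1) := by
    refine monotoneOn_of_hasDerivWithinAt_nonneg (convex_Ico 0 1)
      (fun t ht => (hderiv t ⟨by linarith [ht.1], ht.2⟩).continuousAt.continuousWithinAt)
      (fun t ht => (hderiv t ?_).hasDerivWithinAt) (fun t ht => ?_)
    · rw [interior_Ico] at ht
      exact ⟨by linarith [ht.1], ht.2⟩
    · rw [interior_Ico] at ht
      have := two_le_rpow_one_sub_add_rpow_one_add (p := -a) (by linarith [ht.1]) ht.2
        (by linarith)
      exact mul_nonneg (by linarith) (by linarith)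
  have := hmono ⟨le_rfl, one_pos⟩ ⟨hs₀, hs₁⟩ hs₀
  simp only [φ, sub_zero, add_zero, Real.one_rpow, mul_zero, sub_self] at this
  linarith

theorem rpow_sub_rpow_add_one_le {a x : ℝ} (ha : 1 ≤ a) (hx : 0 < x) :
    x ^ (1 - a) - (x + 1) ^ (1 - a) ≤ (a - 1) * x ^ (-a) := by
  have hsplit : x ^ (1 - a) = x * x ^ (-a) := by
    rw [sub_eq_add_neg, Real.rpow_add hx, Real.rpow_one]
  have hscale : (x + 1) ^ (1 - a) = x ^ (1 - a) * (1 + x⁻¹) ^ (1 - a) := by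
    rw [← Real.mul_rpow hx.le (by positivity), mul_one_add, mul_inv_cancel₀ hx.ne']
  have hbern := mul_le_mul_of_nonneg_left
    (one_add_mul_self_le_rpow_one_add_of_nonpos (s := x⁻¹) (p := 1 - a)
      (by linarith [inv_pos.2 hx]) (by linarith))
    (Real.rpow_nonneg hx.le (1 - a))
  have hexpand : x ^ (1 - a) * (1 + (1 - a) * x⁻¹) = x ^ (1 - a) - (a - 1) * x ^ (-a) := by
    rw [hsplit]
    field_simp
    ring
  rw [← hscale, hexpand] at hbern
  linarith

theorem mul_rpow_le_rpow_sub_half_sub_rpow_add_half {a x : ℝ} (ha : 1 ≤ a) (hx : 1 / 2 < x) :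
    (a - 1) * x ^ (-a) ≤ (x - 1 / 2) ^ (1 - a) - (x + 1 / 2) ^ (1 - a) := by
  have hx₀ : 0 < x := by linarith
  set s := (2 * x)⁻¹
  have hs₀ : 0 ≤ s := by positivity
  have hs₁ : s < 1 := inv_lt_one_of_one_lt₀ (by linarith)
  have hxs : x * s = 1 / 2 := by
    simp only [s]
    field_simp
  have hsub : x - 1 / 2 = x * (1 - s) := by linear_combination hxs
  have hadd : x + 1 / 2 = x * (1 + s) := by linear_combination -hxs
  have hmid := mul_le_mul_of_nonneg_left (mul_le_rpow_one_sub_sub_rpow_one_add ha hs₀ hs₁)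
    (Real.rpow_nonneg hx₀.le (1 - a))
  have hlhs : x ^ (1 - a) * (2 * (a - 1) * s) = (a - 1) * x ^ (-a) := by
    rw [sub_eq_add_neg 1 a, Real.rpow_add hx₀, Real.rpow_one]
    linear_combination 2 * (a - 1) * x ^ (-a) * hxs
  rw [hsub, hadd, Real.mul_rpow hx₀.le (by linarith), Real.mul_rpow hx₀.le (by linarith), ← hlhs]
  linarith

theorem hasSum_sub_succ_of_antitone {g : ℕ → ℝ} (hg : Antitone g)
    (hlim : Tendsto g atTop (𝓝 0)) : HasSum (fun n => g n - g (n + 1)) (g 0) := by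
  rw [hasSum_iff_tendsto_nat_of_nonneg (fun n => sub_nonneg.2 (hg n.le_succ))]
  simp only [Finset.sum_range_sub']
  simpa using tendsto_const_nhds.sub hlim

theorem tsum_mem_Icc_of_sub_succ_le_of_le_sub_succ {f g h : ℕ → ℝ}
    (hg : Antitone g) (hg_lim : Tendsto g atTop (𝓝 0))
    (hh : Antitone h) (hh_lim : Tendsto h atTop (𝓝 0))
    (hgf : ∀ n, g n - g (n + 1) ≤ f n) (hfh : ∀ n, f n ≤ h n - h (n + 1)) :
    g 0 ≤ ∑' n, f n ∧ ∑' n, f n ≤ h 0 := by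
  have hg_sum := hasSum_sub_succ_of_antitone hg hg_lim
  have hh_sum := hasSum_sub_succ_of_antitone hh hh_lim
  have hf : Summable f := Summable.of_nonneg_of_le
    (fun n => (sub_nonneg.2 (hg n.le_succ)).trans (hgf n)) hfh hh_sum.summable
  exact ⟨hg_sum.tsum_eq ▸ hg_sum.summable.tsum_le_tsum hgf hf,
    hh_sum.tsum_eq ▸ hf.tsum_le_tsum hfh hh_sum.summable⟩

theorem antitone_rpow_add_natCast {c p : ℝ} (hc : 0 < c) (hp : p ≤ 0) :
    Antitone fun n : ℕ => (c + n) ^ p :=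
  fun _ _ hmn => Real.rpow_le_rpow_of_nonpos (by positivity) (by gcongr) hp

theorem tendsto_rpow_add_natCast {c p : ℝ} (hp : p < 0) :
    Tendsto (fun n : ℕ => (c + n) ^ p) atTop (𝓝 0) := by
  have := (tendsto_rpow_neg_atTop (neg_pos.2 hp)).comp
    (tendsto_atTop_add_const_left atTop c tendsto_natCast_atTop_atTop)
  simpa only [neg_neg, Function.comp_def] using this

/-- Tail bounds for the series `∑ j^{-a}`, `a > 1`:
`1/((a-1)(k+1)^{a-1}) ≤ ∑_{j=k+1}^∞ j^{-a} ≤ 1/((a-1)(k+1/2)^{a-1})`. -/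
theorem tail_sum_bounds (a : ℝ) (ha : 1 < a) (k : ℕ) :
    1 / ((a - 1) * ((k : ℝ) + 1) ^ (a - 1))
      ≤ ∑' j : ℕ, ((k : ℝ) + 1 + j) ^ (-a) ∧
    ∑' j : ℕ, ((k : ℝ) + 1 + j) ^ (-a)
      ≤ 1 / ((a - 1) * ((k : ℝ) + 1 / 2) ^ (a - 1)) := by
  have hb : 0 < a - 1 := by linarith
  set F : ℝ → ℕ → ℝ := fun c n => (c + n) ^ (1 - a) / (a - 1)
  have hF_anti (c : ℝ) (hc : 0 < c) : Antitone (F c) := fun _ _ hmn =>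
    div_le_div_of_nonneg_right (antitone_rpow_add_natCast hc (by linarith) hmn) hb.le
  have hF_lim (c : ℝ) : Tendsto (F c) atTop (𝓝 0) := by
    simpa using (tendsto_rpow_add_natCast (c := c) (by linarith : 1 - a < 0)).div_const (a - 1)
  have hF_zero (c : ℝ) (hc : 0 < c) : F c 0 = 1 / ((a - 1) * c ^ (a - 1)) := by
    simp only [F, Nat.cast_zero, add_zero]
    rw [← neg_sub a 1, Real.rpow_neg hc.le, one_div, mul_inv,
      div_eq_inv_mul]
  have hlower (n : ℕ) : F (k + 1) n - F (k + 1) (n + 1) ≤ ((k : ℝ) + 1 + n) ^ (-a) := by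
    have := rpow_sub_rpow_add_one_le ha.le (x := k + 1 + n) (by positivity)
    have hright : (k : ℝ) + 1 + n + 1 = k + 1 + (n + 1 : ℕ) := by push_cast; ring
    rwa [hright, ← div_le_iff₀' hb, sub_div] at this
  have hupper (n : ℕ) : ((k : ℝ) + 1 + n) ^ (-a) ≤ F (k + 1 / 2) n - F (k + 1 / 2) (n + 1) := by
    have := mul_rpow_le_rpow_sub_half_sub_rpow_add_half ha.le (x := k + 1 + n) (by linarith)
    have hleft : (k : ℝ) + 1 + n - 1 / 2 = k + 1 / 2 + n := by ring
    have hright : (k : ℝ) + 1 + n + 1 / 2 = k + 1 / 2 + (n + 1 : ℕ) := by push_cast; ring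
    rwa [hleft, hright, ← le_div_iff₀' hb, sub_div] at this
  obtain ⟨hlow, hupp⟩ := tsum_mem_Icc_of_sub_succ_le_of_le_sub_succ
    (hF_anti (k + 1) (by positivity)) (hF_lim _) (hF_anti (k + 1 / 2) (by positivity)) (hF_lim _)
    hlower hupper
  rw [hF_zero (k + 1) (by positivity)] at hlow
  rw [hF_zero (k + 1 / 2) (by positivity)] at hupp
  exact ⟨hlow, hupp⟩
end

section
/- If ω is the uniform measure on [−1/2, 1/2], then C(M,ω) = 1/(2^M (M+1)). -/
/-!
The moments `m_r = 1 / (2^r (r + 1))` satisfy `m_a m_b ≤ m_{a+b}` for `a, b ≥ 0`, because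
`(a + 1)(b + 1) ≥ a + b + 1`. Hence every product `∏ m_{r_j}` with `∑ r_j = M` is at most
`m_M`, which is attained by the one-part composition `[M]`.
-/

open Real

noncomputable def uniformMoment (r : ℝ) : ℝ := 1 / (2 ^ r * (r + 1))

lemma uniformMoment_nonneg {r : ℝ} (hr : 0 ≤ r) : 0 ≤ uniformMoment r := by
  unfold uniformMoment
  positivity

lemma uniformMoment_natCast (n : ℕ) : uniformMoment n = 1 / (2 ^ n * (n + 1)) := by
  rw [uniformMoment, rpow_natCast]

lemma uniformMoment_mul_le {a b : ℝ} (ha : 0 ≤ a) (hb : 0 ≤ b) :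
    uniformMoment a * uniformMoment b ≤ uniformMoment (a + b) := by
  unfold uniformMoment
  rw [div_mul_div_comm, one_mul, rpow_add two_pos]
  apply one_div_le_one_div_of_le (by positivity)
  calc (2 : ℝ) ^ a * 2 ^ b * (a + b + 1)
      ≤ 2 ^ a * 2 ^ b * ((a + 1) * (b + 1)) := by gcongr; nlinarith [mul_nonneg ha hb]
    _ = 2 ^ a * (a + 1) * (2 ^ b * (b + 1)) := by ring

lemma prod_map_uniformMoment_le (L : List ℝ) (hL : ∀ r ∈ L, 0 ≤ r) :
    (L.map uniformMoment).prod ≤ uniformMoment L.sum := by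
  induction L with
  | nil => simp [uniformMoment]
  | cons r L ih =>
    rw [List.forall_mem_cons] at hL
    rw [List.map_cons, List.prod_cons, List.sum_cons]
    calc uniformMoment r * (L.map uniformMoment).prod
        ≤ uniformMoment r * uniformMoment L.sum :=
          mul_le_mul_of_nonneg_left (ih hL.2) (uniformMoment_nonneg hL.1)
      _ ≤ uniformMoment (r + L.sum) :=
          uniformMoment_mul_le hL.1 (List.sum_nonneg hL.2)

/-- For the uniform measure on `[-1/2,1/2]`, where `m_r = 2^{-r}/(r+1)`, the
constant `C(M,ω) = max{∏ m_{r_j} : r₁+⋯+r_ℓ = M, r_j ≥ 1}` equals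
`1/(2^M (M+1))`. -/
theorem C_uniform_symmetric (M : ℕ) (hM : 1 ≤ M) :
    sSup {p : ℝ | ∃ L : List ℕ, (∀ r ∈ L, 0 < r) ∧ L.sum = M ∧
        p = (L.map fun r => (1 : ℝ) / (2 ^ r * (r + 1))).prod}
      = 1 / (2 ^ M * (M + 1)) := by
  rw [← uniformMoment_natCast]
  apply IsGreatest.csSup_eq
  constructor
  · exact ⟨[M], fun r hr => List.eq_of_mem_singleton hr ▸ hM, by simp, by simp [uniformMoment]⟩
  · rintro p ⟨L, -, rfl, rfl⟩
    -- The binder `r` of the statement's lambda is real, so `L` is coerced to a `List ℝ`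
    -- through the list monad and `2 ^ r` is `Real.rpow`.
    calc _ = ((L.map Nat.cast).map uniformMoment).prod := by
          rw [← List.flatMap_pure_eq_map (Nat.cast : ℕ → ℝ)]; rfl
      _ ≤ uniformMoment (L.map Nat.cast).sum := prod_map_uniformMoment_le _ (by simp)
      _ = uniformMoment L.sum := by rw [Nat.cast_list_sum]
end

section
/- If ω is the logistic measure on ℝ with scale λ > 0, then (1/2) λ^M M! < C(M,ω) < 2 λ^M M!. -/
/-! With `t = exp (-|x| / λ)` the logistic density is `t / (λ (1 + t)²)`, which lies between
`(t - 2t²) / λ` and `(t - t² / 2) / λ`. Integrating these against `|x| ^ r` (Gamma integrals)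
gives `λ^r r! ≤ m_r < 2 λ^r r!` for `r ≥ 1`; the one-part composition then gives the lower
bound on `C(M, ω)`. For the upper bound, `g r = 2 λ^r r!` is supermultiplicative on positive
integers since `2 a! b! ≤ (a + b)!`, so every product `∏ m_{r_j}` is `< g M`; as `M` has
finitely many compositions, the supremum is one of these products. -/

open MeasureTheory

noncomputable def logisticMeasure (lam : ℝ) : Measure ℝ :=
  (volume : Measure ℝ).withDensity fun x =>
    ENNReal.ofReal (Real.exp (-x / lam) / (lam * (1 + Real.exp (-x / lam)) ^ 2))

open Real Set
open scoped Nat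

theorem Nat.two_mul_factorial_mul_factorial_le {a b : ℕ} (ha : 0 < a) (hb : 0 < b) :
    2 * (a ! * b !) ≤ (a + b)! := by
  have hchoose : 2 ≤ (a + b).choose b :=
    calc 2 ≤ b + 1 := by omega
      _ = (b + 1).choose b := (Nat.choose_succ_self_right b).symm
      _ ≤ (a + b).choose b := Nat.choose_le_choose b (by omega)
  rw [← Nat.add_choose_mul_factorial_mul_factorial, Nat.mul_assoc]
  exact Nat.mul_le_mul_right _ hchoose

theorem two_mul_pow_mul_factorial_mul_le {lam : ℝ} (hlam : 0 ≤ lam) {a b : ℕ} (ha : 0 < a)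
    (hb : 0 < b) :
    (2 * lam ^ a * a !) * (2 * lam ^ b * b !) ≤ 2 * lam ^ (a + b) * (a + b)! := by
  have h : (2 * (a ! * b !) : ℝ) ≤ (a + b)! := by
    exact_mod_cast Nat.two_mul_factorial_mul_factorial_le ha hb
  calc (2 * lam ^ a * a !) * (2 * lam ^ b * b !) = 2 * lam ^ (a + b) * (2 * (a ! * b !)) := by
        rw [pow_add]; ring
    _ ≤ 2 * lam ^ (a + b) * (a + b)! := by gcongr

theorem List.prod_map_lt_of_lt_of_superMul {R : Type*} [CommSemiring R] [PartialOrder R]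
    [IsStrictOrderedRing R] {f g : ℕ → R} (hf : ∀ r, 0 ≤ f r)
    (hfg : ∀ r, 0 < r → f r < g r) (hg : ∀ a b, 0 < a → 0 < b → g a * g b ≤ g (a + b)) :
    ∀ {L : List ℕ}, L ≠ [] → (∀ r ∈ L, 0 < r) → (L.map f).prod < g L.sum
  | [], hL, _ => absurd rfl hL
  | [a], _, hpos => by simpa using hfg a (hpos a (by simp))
  | a :: b :: t, _, hpos => by
    have hrest := prod_map_lt_of_lt_of_superMul hf hfg hg (L := b :: t) (by simp)
      (fun r hr => hpos r (List.mem_cons_of_mem a hr))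
    have ha : 0 < a := hpos a (by simp)
    have hsum : 0 < (b :: t).sum :=
      lt_of_lt_of_le (hpos b (by simp)) (List.le_sum_of_mem (by simp))
    calc ((a :: b :: t).map f).prod = f a * ((b :: t).map f).prod := by simp
      _ < g a * g (b :: t).sum :=
        mul_lt_mul'' (hfg a ha) hrest (hf a) (List.prod_nonneg fun _ hx => by
          obtain ⟨r, -, rfl⟩ := List.mem_map.mp hx; exact hf r)
      _ ≤ g (a :: b :: t).sum := by rw [List.sum_cons]; exact hg _ _ ha hsum

theorem setOf_compositions_eq_range {α : Type*} (M : ℕ) (F : List ℕ → α) :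
    {p | ∃ L : List ℕ, (∀ r ∈ L, 0 < r) ∧ L.sum = M ∧ p = F L}
      = Set.range fun c : Composition M => F c.blocks := by
  ext p
  constructor
  · rintro ⟨L, hpos, hsum, rfl⟩
    exact ⟨⟨L, fun h => hpos _ h, hsum⟩, rfl⟩
  · rintro ⟨c, rfl⟩
    exact ⟨c.blocks, fun _ => c.blocks_pos, c.blocks_sum, rfl⟩

theorem integrableOn_pow_mul_exp_neg_div_Ioi {a : ℝ} (ha : 0 < a) (r : ℕ) :
    IntegrableOn (fun x => x ^ r * exp (-x / a)) (Ioi 0) := by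
  refine (integrableOn_rpow_mul_exp_neg_mul_rpow (s := r) (p := 1) (b := a⁻¹)
    (by linarith [(Nat.cast_nonneg r : (0 : ℝ) ≤ r)]) one_pos (inv_pos.mpr ha)).congr_fun
    (fun x _ => ?_) measurableSet_Ioi
  simp [div_eq_inv_mul]

theorem integral_pow_mul_exp_neg_div_Ioi {a : ℝ} (ha : 0 < a) (r : ℕ) :
    ∫ x in Ioi 0, x ^ r * exp (-x / a) = a ^ (r + 1) * r ! := by
  have h := integral_rpow_mul_exp_neg_mul_Ioi (a := r + 1) (by positivity) (inv_pos.mpr ha)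
  rw [Real.Gamma_nat_eq_factorial, one_div, inv_inv, add_sub_cancel_right] at h
  norm_cast at h
  rw [← h]
  refine setIntegral_congr_fun measurableSet_Ioi fun x _ => ?_
  simp [div_eq_inv_mul]

theorem sub_two_mul_sq_le_div_one_add_sq {t : ℝ} (ht : 0 ≤ t) :
    t - 2 * t ^ 2 ≤ t / (1 + t) ^ 2 := by
  rw [le_div_iff₀ (by positivity)]
  nlinarith [pow_nonneg ht 3, pow_nonneg ht 4]

theorem div_one_add_sq_le_sub_half_mul_sq {t : ℝ} (ht₀ : 0 ≤ t) (ht₁ : t ≤ 1) :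
    t / (1 + t) ^ 2 ≤ t - 2⁻¹ * t ^ 2 := by
  rw [div_le_iff₀ (by positivity)]
  nlinarith [pow_nonneg ht₀ 3, mul_nonneg (mul_nonneg ht₀ ht₀) (sub_nonneg.mpr ht₁)]

theorem exp_neg_div_half_eq_sq (lam x : ℝ) : exp (-x / (lam / 2)) = exp (-x / lam) ^ 2 := by
  rw [← exp_nat_mul]; congr 1; push_cast; ring

noncomputable def logisticDensity (lam x : ℝ) : ℝ :=
  exp (-x / lam) / (lam * (1 + exp (-x / lam)) ^ 2)

theorem logisticDensity_neg (lam x : ℝ) : logisticDensity lam (-x) = logisticDensity lam x := by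
  have hx := (exp_pos (x / lam)).ne'
  simp only [logisticDensity, neg_neg, neg_div, exp_neg]
  rcases eq_or_ne lam 0 with rfl | _
  · simp
  field_simp
  ring

theorem logisticDensity_nonneg {lam : ℝ} (hlam : 0 ≤ lam) (x : ℝ) :
    0 ≤ logisticDensity lam x := by
  unfold logisticDensity; positivity

theorem integral_abs_pow_logisticMeasure {lam : ℝ} (hlam : 0 ≤ lam) (r : ℕ) :
    ∫ x, |x| ^ r ∂(logisticMeasure lam)
      = 2 * ∫ x in Ioi 0, x ^ r * logisticDensity lam x := by
  have hmeas : Measurable fun x => (logisticDensity lam x).toNNReal := by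
    unfold logisticDensity; fun_prop
  calc ∫ x, |x| ^ r ∂(logisticMeasure lam)
      = ∫ x, (logisticDensity lam x).toNNReal • |x| ^ r :=
        integral_withDensity_eq_integral_smul hmeas _
    _ = ∫ x, |x| ^ r * logisticDensity lam |x| := by
        congr 1 with x
        rw [NNReal.smul_def, Real.coe_toNNReal _ (logisticDensity_nonneg hlam x), smul_eq_mul,
          mul_comm]
        rcases abs_choice x with h | h <;> rw [h]
        rw [logisticDensity_neg]
    _ = 2 * ∫ x in Ioi 0, x ^ r * logisticDensity lam x :=
        integral_comp_abs (f := fun y => y ^ r * logisticDensity lam y)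

section Bounds

variable {lam : ℝ} (hlam : 0 < lam)
include hlam

theorem logisticDensity_eq_div (x : ℝ) :
    logisticDensity lam x = exp (-x / lam) / (1 + exp (-x / lam)) ^ 2 / lam := by
  unfold logisticDensity; field_simp

theorem sub_two_mul_exp_le_logisticDensity (x : ℝ) :
    (exp (-x / lam) - 2 * exp (-x / (lam / 2))) / lam ≤ logisticDensity lam x := by
  rw [logisticDensity_eq_div hlam, exp_neg_div_half_eq_sq]
  gcongr
  exact sub_two_mul_sq_le_div_one_add_sq (exp_pos _).le

theorem logisticDensity_le_sub_half_mul_exp {x : ℝ} (hx : 0 ≤ x) :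
    logisticDensity lam x ≤ (exp (-x / lam) - 2⁻¹ * exp (-x / (lam / 2))) / lam := by
  rw [logisticDensity_eq_div hlam, exp_neg_div_half_eq_sq]
  gcongr
  exact div_one_add_sq_le_sub_half_mul_sq (exp_pos _).le
    (exp_le_one_iff.mpr (div_nonpos_of_nonpos_of_nonneg (neg_nonpos.mpr hx) hlam.le))

theorem integrableOn_pow_mul_logisticDensity (r : ℕ) :
    IntegrableOn (fun x => x ^ r * logisticDensity lam x) (Ioi 0) := by
  refine ((integrableOn_pow_mul_exp_neg_div_Ioi hlam r).div_const lam).mono' ?_ ?_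
  · unfold logisticDensity; fun_prop
  · refine (ae_restrict_iff' measurableSet_Ioi).mpr (ae_of_all _ fun x (hx : 0 < x) => ?_)
    rw [Real.norm_of_nonneg (by have := logisticDensity_nonneg hlam.le x; positivity),
      mul_div_assoc, logisticDensity_eq_div hlam]
    gcongr
    exact div_le_self (exp_pos _).le (one_le_pow₀ (by linarith [exp_pos (-x / lam)]))

theorem integrableOn_pow_mul_exp_sub (r : ℕ) (c : ℝ) :
    IntegrableOn (fun x => x ^ r * ((exp (-x / lam) - c * exp (-x / (lam / 2))) / lam))
      (Ioi 0) := by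
  have h := ((integrableOn_pow_mul_exp_neg_div_Ioi hlam r).sub
    ((integrableOn_pow_mul_exp_neg_div_Ioi (half_pos hlam) r).const_mul c)).div_const lam
  exact IntegrableOn.congr_fun h (fun x _ => by simp only [Pi.sub_apply]; ring) measurableSet_Ioi

theorem integral_pow_mul_exp_sub (r : ℕ) (c : ℝ) :
    ∫ x in Ioi 0, x ^ r * ((exp (-x / lam) - c * exp (-x / (lam / 2))) / lam)
      = lam ^ r * r ! * (1 - c / 2 ^ (r + 1)) := by
  have h1 := integrableOn_pow_mul_exp_neg_div_Ioi hlam r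
  have h2 := integrableOn_pow_mul_exp_neg_div_Ioi (half_pos hlam) r
  have hsplit : ∀ x : ℝ, x ^ r * ((exp (-x / lam) - c * exp (-x / (lam / 2))) / lam)
      = lam⁻¹ * (x ^ r * exp (-x / lam)) - (c / lam) * (x ^ r * exp (-x / (lam / 2))) := by
    intro x; ring
  simp_rw [hsplit]
  rw [integral_sub (h1.const_mul _) (h2.const_mul _), integral_const_mul, integral_const_mul,
    integral_pow_mul_exp_neg_div_Ioi hlam, integral_pow_mul_exp_neg_div_Ioi (half_pos hlam),
    div_pow]
  field_simp
  ring

theorem setIntegral_pow_mul_logisticDensity_le (r : ℕ) :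
    ∫ x in Ioi 0, x ^ r * logisticDensity lam x
      ≤ lam ^ r * r ! * (1 - 2⁻¹ / 2 ^ (r + 1)) := by
  rw [← integral_pow_mul_exp_sub hlam]
  exact setIntegral_mono_on (integrableOn_pow_mul_logisticDensity hlam r)
    (integrableOn_pow_mul_exp_sub hlam r _) measurableSet_Ioi fun x (hx : 0 < x) =>
      mul_le_mul_of_nonneg_left (logisticDensity_le_sub_half_mul_exp hlam hx.le)
        (pow_nonneg hx.le r)

theorem le_setIntegral_pow_mul_logisticDensity (r : ℕ) :
    lam ^ r * r ! * (1 - 2 / 2 ^ (r + 1)) ≤ ∫ x in Ioi 0, x ^ r * logisticDensity lam x := by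
  rw [← integral_pow_mul_exp_sub hlam]
  exact setIntegral_mono_on (integrableOn_pow_mul_exp_sub hlam r _)
    (integrableOn_pow_mul_logisticDensity hlam r) measurableSet_Ioi fun x (hx : 0 < x) =>
      mul_le_mul_of_nonneg_left (sub_two_mul_exp_le_logisticDensity hlam x) (pow_nonneg hx.le r)

theorem integral_abs_pow_logisticMeasure_lt (r : ℕ) :
    ∫ x, |x| ^ r ∂(logisticMeasure lam) < 2 * lam ^ r * r ! := by
  have hpos : (0 : ℝ) < lam ^ r * r ! := by positivity
  have hslack : (0 : ℝ) < 2⁻¹ / 2 ^ (r + 1) := by positivity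
  rw [integral_abs_pow_logisticMeasure hlam.le]
  nlinarith [setIntegral_pow_mul_logisticDensity_le hlam r]

theorem le_integral_abs_pow_logisticMeasure {r : ℕ} (hr : 1 ≤ r) :
    lam ^ r * r ! ≤ ∫ x, |x| ^ r ∂(logisticMeasure lam) := by
  have htwo : (2 : ℝ) / 2 ^ (r + 1) ≤ 2⁻¹ := by
    have : (2 : ℝ) ≤ 2 ^ r := by simpa using pow_le_pow_right₀ one_le_two hr
    rw [div_le_iff₀ (by positivity), pow_succ]
    nlinarith
  have hpos : (0 : ℝ) ≤ lam ^ r * r ! := by positivity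
  rw [integral_abs_pow_logisticMeasure hlam.le]
  nlinarith [le_setIntegral_pow_mul_logisticDensity hlam r]

end Bounds

/-- For the logistic measure `ω` with scale `λ`, the constant
`C(M,ω) = max{∏ m_{r_j} : r₁+⋯+r_ℓ = M, r_j ≥ 1}`, with
`m_r = E_ω|x|^r`, satisfies `λ^M M!/2 < C(M,ω) < 2 λ^M M!`. -/
theorem C_logistic_bounds (lam : ℝ) (hlam : 0 < lam) (M : ℕ) (hM : 1 ≤ M) :
    (1 / 2) * lam ^ M * (Nat.factorial M : ℝ)
      < sSup {p : ℝ | ∃ L : List ℕ, (∀ r ∈ L, 0 < r) ∧ L.sum = M ∧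
          p = (L.map fun r => ∫ x, |x| ^ r ∂(logisticMeasure lam)).prod} ∧
    sSup {p : ℝ | ∃ L : List ℕ, (∀ r ∈ L, 0 < r) ∧ L.sum = M ∧
          p = (L.map fun r => ∫ x, |x| ^ r ∂(logisticMeasure lam)).prod}
      < 2 * lam ^ M * (Nat.factorial M : ℝ) := by
  set S := {p : ℝ | ∃ L : List ℕ, (∀ r ∈ L, 0 < r) ∧ L.sum = M ∧
    p = (L.map fun r => ∫ x, |x| ^ r ∂(logisticMeasure lam)).prod} with hS
  have hfin : S.Finite := by rw [hS, setOf_compositions_eq_range]; exact Set.finite_range _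
  have hmem : ∫ x, |x| ^ M ∂(logisticMeasure lam) ∈ S :=
    ⟨[M], fun r hr => List.mem_singleton.mp hr ▸ hM, by simp, by simp⟩
  constructor
  · have : (0 : ℝ) < lam ^ M * M ! := by positivity
    calc 1 / 2 * lam ^ M * M ! < lam ^ M * M ! := by linarith
      _ ≤ ∫ x, |x| ^ M ∂(logisticMeasure lam) := le_integral_abs_pow_logisticMeasure hlam hM
      _ ≤ sSup S := le_csSup hfin.bddAbove hmem
  · obtain ⟨L, hpos, hsum, hL⟩ := Set.Nonempty.csSup_mem ⟨_, hmem⟩ hfin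
    rw [hL, ← hsum]
    exact List.prod_map_lt_of_lt_of_superMul (g := fun r => 2 * lam ^ r * r !)
      (fun r => integral_nonneg fun x => by positivity)
      (fun r _ => integral_abs_pow_logisticMeasure_lt hlam r)
      (fun a b ha hb => two_mul_pow_mul_factorial_mul_le hlam.le ha hb)
      (by rintro rfl; rw [List.sum_nil] at hsum; omega) hpos
end

section
/- For the r-folded Wiener kernel K_r and real numbers 0 ≤ Y_k ≤ Y_∞, the quantity E(Y_∞,Y_k) := ∫₀^∞ [(Y_∞−t)_+^{r−1} − (Y_k−t)_+^{r−1}]² dt satisfies E(Y_∞,Y_k) ≤ (Y_∞ − Y_k)² Y_∞^{2r−3} [1/(2r−1) + (r−1)²/(2r−3)]. -/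
/-!
Write `a = (Y_∞ - t)_+` and `b = (Y_k - t)_+`, so that `0 ≤ b ≤ a` and `a - b ≤ Y_∞ - Y_k`.
The mean value bound `a^{r-1} - b^{r-1} ≤ (r-1) a^{r-2} (a - b)` gives the pointwise estimate
`[a^{r-1} - b^{r-1}]² ≤ (r-1)² (Y_∞ - Y_k)² (Y_∞ - t)^{2r-4}` for `t ≤ Y_∞`, while the integrand
vanishes for `t > Y_∞`. Integrating over `(0, Y_∞]` yields the term `(r-1)²/(2r-3)` alone,
and the term `1/(2r-1)` is a free nonnegative surplus.
-/

open MeasureTheory Set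

lemma sq_posPart_pow_sub_le {x y t : ℝ} (hxy : x ≤ y) (hty : t ≤ y) (n : ℕ) :
    (max (y - t) 0 ^ n - max (x - t) 0 ^ n) ^ 2
      ≤ ((y - x) * n) ^ 2 * (y - t) ^ (2 * (n - 1)) := by
  rw [max_eq_left (sub_nonneg.2 hty)]
  have hb : 0 ≤ max (x - t) 0 := le_max_right _ _
  have hba : max (x - t) 0 ≤ y - t := max_le (by linarith) (sub_nonneg.2 hty)
  have hmvt := abs_pow_sub_pow_le (y - t) (max (x - t) 0) n
  rw [abs_of_nonneg hb, abs_of_nonneg (hb.trans hba), max_eq_left hba] at hmvt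
  have hgap : |y - t - max (x - t) 0| ≤ y - x := by
    rw [abs_of_nonneg (sub_nonneg.2 hba)]
    linarith [le_max_left (x - t) 0]
  calc ((y - t) ^ n - max (x - t) 0 ^ n) ^ 2
      = |(y - t) ^ n - max (x - t) 0 ^ n| ^ 2 := (sq_abs _).symm
    _ ≤ (|y - t - max (x - t) 0| * n * (y - t) ^ (n - 1)) ^ 2 := by gcongr
    _ ≤ ((y - x) * n * (y - t) ^ (n - 1)) ^ 2 := by gcongr
    _ = ((y - x) * n) ^ 2 * (y - t) ^ (2 * (n - 1)) := by ring

lemma setIntegral_Ioi_zero_sq_posPart_pow_sub_eq_Ioc {x y : ℝ} (hxy : x ≤ y) {n : ℕ}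
    (hn : n ≠ 0) :
    ∫ t in Ioi 0, (max (y - t) 0 ^ n - max (x - t) 0 ^ n) ^ 2
      = ∫ t in Ioc 0 y, (max (y - t) 0 ^ n - max (x - t) 0 ^ n) ^ 2 := by
  refine setIntegral_eq_of_subset_of_forall_sdiff_eq_zero measurableSet_Ioi Ioc_subset_Ioi_self ?_
  rintro t ⟨ht0, htY⟩
  have hyt : y < t := lt_of_not_ge fun h => htY ⟨ht0, h⟩
  rw [max_eq_right (by linarith), max_eq_right (by linarith), zero_pow hn, sub_self,
    zero_pow two_ne_zero]

lemma integral_Ioc_sub_pow {y : ℝ} (hy : 0 ≤ y) (k : ℕ) :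
    ∫ t in Ioc 0 y, (y - t) ^ k = y ^ (k + 1) / (k + 1) := by
  rw [← intervalIntegral.integral_of_le hy,
    intervalIntegral.integral_comp_sub_left (fun t => t ^ k) y, sub_self, sub_zero, integral_pow]
  simp

lemma integral_sq_posPart_pow_sub_le {x y : ℝ} (hxy : x ≤ y) (hy : 0 ≤ y) {n : ℕ} (hn : n ≠ 0) :
    ∫ t in Ioi 0, (max (y - t) 0 ^ n - max (x - t) 0 ^ n) ^ 2
      ≤ ((y - x) * n) ^ 2 * (y ^ (2 * (n - 1) + 1) / (2 * (n - 1) + 1 : ℕ)) := by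
  rw [setIntegral_Ioi_zero_sq_posPart_pow_sub_eq_Ioc hxy hn]
  calc ∫ t in Ioc 0 y, (max (y - t) 0 ^ n - max (x - t) 0 ^ n) ^ 2
      ≤ ∫ t in Ioc 0 y, ((y - x) * n) ^ 2 * (y - t) ^ (2 * (n - 1)) := by
        refine setIntegral_mono_on (Continuous.integrableOn_Ioc (by fun_prop))
          (Continuous.integrableOn_Ioc (by fun_prop)) measurableSet_Ioc ?_
        exact fun t ht => sq_posPart_pow_sub_le hxy ht.2 n
    _ = ((y - x) * n) ^ 2 * (y ^ (2 * (n - 1) + 1) / (2 * (n - 1) + 1 : ℕ)) := by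
        rw [integral_const_mul, integral_Ioc_sub_pow hy, Nat.cast_succ]

/-- For the `r`-folded Wiener kernel, with `0 ≤ Y_k ≤ Y_∞`:
`∫₀^∞ [(Y_∞-t)_+^{r-1} - (Y_k-t)_+^{r-1}]² dt
  ≤ (Y_∞-Y_k)² Y_∞^{2r-3} [1/(2r-1) + (r-1)²/(2r-3)]`. -/
theorem rfold_E_bound (r : ℕ) (hr : 2 ≤ r) (Yk Yinf : ℝ)
    (h0 : 0 ≤ Yk) (h1 : Yk ≤ Yinf) :
    ∫ t in Set.Ioi (0 : ℝ),
        (max (Yinf - t) 0 ^ (r - 1) - max (Yk - t) 0 ^ (r - 1)) ^ 2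
      ≤ (Yinf - Yk) ^ 2 * Yinf ^ (2 * r - 3)
          * (1 / (2 * (r : ℝ) - 1) + ((r : ℝ) - 1) ^ 2 / (2 * (r : ℝ) - 3)) := by
  refine (integral_sq_posPart_pow_sub_le h1 (h0.trans h1) (n := r - 1) (by omega)).trans ?_
  have hexp : 2 * (r - 1 - 1) + 1 = 2 * r - 3 := by omega
  have hcast : ((2 * r - 3 : ℕ) : ℝ) = 2 * (r : ℝ) - 3 := by
    rw [Nat.cast_sub (by omega)]; push_cast; ring
  rw [hexp, hcast, Nat.cast_sub (by omega : 1 ≤ r), Nat.cast_one]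
  have hsurplus : 0 ≤ 1 / (2 * (r : ℝ) - 1) := by
    have : (2 : ℝ) ≤ r := by exact_mod_cast hr
    exact one_div_nonneg.2 (by linarith)
  have hY : 0 ≤ Yinf ^ (2 * r - 3) := pow_nonneg (h0.trans h1) _
  calc ((Yinf - Yk) * ((r : ℝ) - 1)) ^ 2 * (Yinf ^ (2 * r - 3) / (2 * (r : ℝ) - 3))
      = (Yinf - Yk) ^ 2 * Yinf ^ (2 * r - 3) * (((r : ℝ) - 1) ^ 2 / (2 * (r : ℝ) - 3)) := by ring
    _ ≤ _ := by gcongr; linarith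
end
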